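/- arXiv:1310.2462 — 5 statements merged into one kernel-verified Lean document; each statement's English description precedes it below -/
import Mathlib

section
/- Let λ and μ be complementary partitions inside an a×b rectangle, i.e. λᵢ + μ_{b−i+1} = a for 1 ≤ i ≤ b (with parts padded by zeros). Define φ_b(λ,x) = Π_{(i,j)∈λ} ((j−1) + k(i−1−b) + x) / (λᵢ − j + k(i−1−λ'_j) + x) as a rational function in x and k. Then φ_b(λ,x) = φ_b(μ,x). -/
/-- The conjugate partition: λ'_{j+1} = #{i < n : λᵢ > j} (0-based column index j). -/
def conjPart (lam : ℕ → ℕ) (n j : ℕ) : ℕ :=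
  ((Finset.range n).filter fun i => j < lam i).card

/-- φ_p(λ,x) = Π_{(i,j)∈λ} ((j−1) + k(i−1−p) + x) / (λᵢ − j + k(i−1−λ'_j) + x),
with 0-based box indices, `rows` rows and parameter p. -/
noncomputable def phiP (lam : ℕ → ℕ) (rows : ℕ) (p x k : ℝ) : ℝ :=
  ∏ i ∈ Finset.range rows, ∏ j ∈ Finset.range (lam i),
    ((j : ℝ) + k * ((i : ℝ) - p) + x) /
      ((lam i : ℝ) - ((j : ℝ) + 1) + k * ((i : ℝ) - (conjPart lam rows j : ℝ)) + x)

/-!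
Write `φ_b(λ) = N(λ) / D(λ)` with `N` the product of the numerators and `D` that of the
hook-type denominators. Read column by column in the `a × b` rectangle, the boxes of `λ` contribute
the factors of `N(λ)` and the boxes outside `λ`, which are the rotated boxes of `μ`, the factors of
`D(μ)`; in column `j` they combine to `∏_{t<b} (x - k(t+1) + g_t(j))` with
`g_t(j) = j - λ_{λ'_j + t}`.
For fixed `t`, the number of columns with `g_t(j) ≥ v` is the number of pairs of columns at distance
`v` whose heights differ by at most `t`, and this is unchanged on passing to the complement, because
the column heights of `μ` are those of `λ` reversed and subtracted from `b`. Hence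
`N(λ) D(μ) = N(μ) D(λ)`.
-/

open Finset

theorem Finset.map_val_eq_of_card_filter_le_eq {ι : Type*} [DecidableEq ι] (s : Finset ι)
    (f g : ι → ℕ) (h : ∀ v, #{j ∈ s | v ≤ f j} = #{j ∈ s | v ≤ g j}) :
    s.val.map f = s.val.map g := by
  have split (f : ι → ℕ) (v : ℕ) :
      #{j ∈ s | v ≤ f j} = #{j ∈ s | v = f j} + #{j ∈ s | v + 1 ≤ f j} := by
    rw [← card_union_of_disjoint (disjoint_filter.2 fun _ _ h₁ h₂ => by omega)]
    congr 1
    ext j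
    by_cases hj : j ∈ s <;> simp only [mem_union, mem_filter, hj, true_and, false_and, or_self]
    omega
  refine Multiset.ext.2 fun v => ?_
  have := split f v
  have := split g v
  have := h v
  have := h (v + 1)
  simp only [Multiset.count_map, ← filter_val, card_val]
  omega

section

variable {lam mu : ℕ → ℕ} {a b : ℕ}

theorem conjPart_le (lam : ℕ → ℕ) (n j : ℕ) : conjPart lam n j ≤ n := by
  simpa [conjPart] using card_filter_le (range n) fun i => j < lam i

theorem lt_conjPart_iff (hA : Antitone lam) {i j : ℕ} :
    i < conjPart lam b j ↔ i < b ∧ j < lam i := by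
  constructor
  · intro hi
    by_contra hcon
    have hsub : {m ∈ range b | j < lam m} ⊆ range i := fun m hm => by
      rw [mem_filter, mem_range] at hm
      rw [mem_range]
      by_contra! hmi
      exact hcon ⟨hmi.trans_lt hm.1, hm.2.trans_le (hA hmi)⟩
    have := card_le_card hsub
    simp only [card_range] at this
    exact absurd hi (not_lt.2 this)
  · rintro ⟨hib, hj⟩
    have hsub : range (i + 1) ⊆ {m ∈ range b | j < lam m} := fun m hm => by
      rw [mem_range, Nat.lt_succ_iff] at hm
      rw [mem_filter, mem_range]
      exact ⟨hm.trans_lt hib, hj.trans_le (hA hm)⟩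
    simpa [conjPart] using card_le_card hsub

theorem conjPart_le_iff (hA : Antitone lam) (h0 : ∀ i, b ≤ i → lam i = 0) {r j : ℕ} :
    conjPart lam b j ≤ r ↔ lam r ≤ j := by
  rw [← not_lt, lt_conjPart_iff hA, ← not_lt]
  constructor
  · intro h hr
    exact h ⟨by_contra fun hrb => by simp [h0 r (by omega)] at hr, hr⟩
  · exact fun h hr => h hr.2

theorem lam_conjPart_add_le (hA : Antitone lam) (h0 : ∀ i, b ≤ i → lam i = 0) (j t : ℕ) :
    lam (conjPart lam b j + t) ≤ j :=
  (conjPart_le_iff hA h0).1 (Nat.le_add_right _ _)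

def IsComplement (a b : ℕ) (lam mu : ℕ → ℕ) : Prop :=
  ∀ i < b, lam i + mu (b - 1 - i) = a

namespace IsComplement

theorem le (hc : IsComplement a b lam mu) {i : ℕ} (hi : i < b) : lam i ≤ a := by
  have := hc i hi
  omega

theorem apply_reflect (hc : IsComplement a b lam mu) {i : ℕ} (hi : i < b) :
    mu i = a - lam (b - 1 - i) := by
  have := hc (b - 1 - i) (by omega)
  rw [show b - 1 - (b - 1 - i) = i by omega] at this
  omega

theorem symm (hc : IsComplement a b lam mu) : IsComplement a b mu lam := fun i hi => by
  have := hc.apply_reflect hi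
  have := hc.le (show b - 1 - i < b by omega)
  omega

theorem conjPart_eq (hc : IsComplement a b lam mu) {j : ℕ} (hj : j < a) :
    conjPart mu b j = b - conjPart lam b (a - 1 - j) := by
  have hreflect : #{i ∈ range b | j < mu i} = #{i ∈ range b | ¬ a - 1 - j < lam i} := by
    apply card_nbij' (fun i => b - 1 - i) (fun i => b - 1 - i)
    · intro i hi
      simp only [coe_filter, mem_range, Set.mem_ofPred_eq] at hi ⊢
      have := hc.apply_reflect hi.1
      omega
    · intro i hi
      simp only [coe_filter, mem_range, Set.mem_ofPred_eq] at hi ⊢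
      have := hc.apply_reflect (show b - 1 - i < b by omega)
      rw [show b - 1 - (b - 1 - i) = i by omega] at this
      omega
    all_goals
      intro i hi
      simp only [coe_filter, mem_range, Set.mem_ofPred_eq] at hi ⊢
      omega
  rw [conjPart, hreflect, filter_not, card_sdiff_of_subset (filter_subset _ _), card_range]
  rfl

end IsComplement

theorem prod_rows_eq_prod_cols {M : Type*} [CommMonoid M] (hA : Antitone lam)
    (hle : ∀ i < b, lam i ≤ a) (f : ℕ → ℕ → M) :
    ∏ i ∈ range b, ∏ j ∈ range (lam i), f i j
      = ∏ j ∈ range a, ∏ i ∈ range (conjPart lam b j), f i j :=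
  prod_comm' fun i j => by
    simp only [mem_range, lt_conjPart_iff hA]
    constructor
    · rintro ⟨hi, hj⟩
      exact ⟨⟨hi, hj⟩, hj.trans_le (hle i hi)⟩
    · rintro ⟨h, -⟩
      exact h

theorem prod_rows_compl_eq_prod_cols_compl {M : Type*} [CommMonoid M] (hA : Antitone lam)
    (f : ℕ → ℕ → M) :
    ∏ i ∈ range b, ∏ j ∈ Ico (lam i) a, f i j
      = ∏ j ∈ range a, ∏ i ∈ Ico (conjPart lam b j) b, f i j :=
  prod_comm' fun i j => by
    have := @lt_conjPart_iff lam b hA i j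
    simp only [mem_range, mem_Ico]
    omega

noncomputable def phiNum (lam : ℕ → ℕ) (b : ℕ) (x k : ℝ) : ℝ :=
  ∏ i ∈ range b, ∏ j ∈ range (lam i), ((j : ℝ) + k * ((i : ℝ) - b) + x)

noncomputable def phiDen (lam : ℕ → ℕ) (b : ℕ) (x k : ℝ) : ℝ :=
  ∏ i ∈ range b, ∏ j ∈ range (lam i),
    ((lam i : ℝ) - ((j : ℝ) + 1) + k * ((i : ℝ) - conjPart lam b j) + x)

theorem phiP_eq_div (lam : ℕ → ℕ) (b : ℕ) (x k : ℝ) :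
    phiP lam b b x k = phiNum lam b x k / phiDen lam b x k := by
  simp only [phiP, phiNum, phiDen, ← prod_div_distrib]

theorem phiDen_ne_zero {x k : ℝ} (hd : ∀ i < b, ∀ j < lam i,
      (lam i : ℝ) - ((j : ℝ) + 1) + k * ((i : ℝ) - (conjPart lam b j : ℝ)) + x ≠ 0) :
    phiDen lam b x k ≠ 0 :=
  prod_ne_zero_iff.2 fun i hi => prod_ne_zero_iff.2 fun j hj =>
    hd i (mem_range.1 hi) j (mem_range.1 hj)

theorem phiDen_of_isComplement (hc : IsComplement a b lam mu) (x k : ℝ) :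
    phiDen mu b x k = ∏ i ∈ range b, ∏ j ∈ Ico (lam i) a,
      (x + ((j : ℝ) - lam i) - k * ((i : ℝ) + 1 - conjPart lam b j)) := by
  rw [phiDen, ← prod_range_reflect]
  refine prod_congr rfl fun i hi => ?_
  rw [mem_range] at hi
  have hrow : mu (b - 1 - i) = a - lam i := by
    have := hc i hi
    omega
  have hla := hc.le hi
  rw [prod_Ico_eq_prod_range, hrow, ← prod_range_reflect]
  refine prod_congr rfl fun j hj => ?_
  rw [mem_range] at hj
  rw [hc.conjPart_eq (by omega), show a - 1 - (a - lam i - 1 - j) = lam i + j by omega,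
    Nat.cast_sub (conjPart_le lam b _), show a - lam i - 1 - j = a - (lam i + 1 + j) by omega,
    show b - 1 - i = b - (1 + i) by omega]
  push_cast [Nat.cast_sub hla, Nat.cast_sub (show lam i + 1 + j ≤ a by omega),
    Nat.cast_sub (show 1 + i ≤ b by omega)]
  ring

/-- For column `j` and the row `t` steps below its foot, the distance from the end of that row
to column `j`. -/
def gap (lam : ℕ → ℕ) (b t j : ℕ) : ℕ :=
  j - lam (conjPart lam b j + t)

noncomputable def gapProd (lam : ℕ → ℕ) (a b : ℕ) (x k : ℝ) : ℝ :=
  ∏ t ∈ range b, ∏ j ∈ range a, (x - k * ((t : ℝ) + 1) + gap lam b t j)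

theorem prod_column_eq_prod_gap (hA : Antitone lam) (h0 : ∀ i, b ≤ i → lam i = 0) (j : ℕ)
    (x k : ℝ) :
    (∏ i ∈ range (conjPart lam b j), ((j : ℝ) + k * ((i : ℝ) - b) + x)) *
        ∏ i ∈ Ico (conjPart lam b j) b,
          (x + ((j : ℝ) - lam i) - k * ((i : ℝ) + 1 - conjPart lam b j))
      = ∏ t ∈ range b, (x - k * ((t : ℝ) + 1) + gap lam b t j) := by
  set c := conjPart lam b j with hc_def
  have hcb : c ≤ b := conjPart_le lam b j
  rw [← Nat.sub_add_cancel hcb, prod_range_add, Nat.sub_add_cancel hcb, mul_comm,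
    prod_Ico_eq_prod_range, ← prod_range_reflect _ c]
  congr 1
  · refine prod_congr rfl fun t _ => ?_
    rw [gap, ← hc_def, Nat.cast_sub (lam_conjPart_add_le hA h0 j t)]
    push_cast
    ring
  · refine prod_congr rfl fun i hi => ?_
    rw [mem_range] at hi
    rw [gap, ← hc_def, h0 _ (by omega), Nat.sub_zero, show c - 1 - i = c - (1 + i) by omega]
    push_cast [Nat.cast_sub hcb, Nat.cast_sub (show 1 + i ≤ c by omega)]
    ring

theorem phiNum_mul_phiDen_of_isComplement (hA : Antitone lam) (h0 : ∀ i, b ≤ i → lam i = 0)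
    (hc : IsComplement a b lam mu) (x k : ℝ) :
    phiNum lam b x k * phiDen mu b x k = gapProd lam a b x k := by
  rw [phiDen_of_isComplement hc, phiNum, prod_rows_eq_prod_cols hA fun _ => hc.le,
    prod_rows_compl_eq_prod_cols_compl hA, ← prod_mul_distrib, gapProd, prod_comm]
  exact prod_congr rfl fun j _ => prod_column_eq_prod_gap hA h0 j x k

theorem card_filter_le_gap (hA : Antitone lam) (h0 : ∀ i, b ≤ i → lam i = 0) (t v : ℕ) :
    #{j ∈ range a | v ≤ gap lam b t j}
      = #{j ∈ range (a - v) | conjPart lam b j ≤ conjPart lam b (j + v) + t} := by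
  apply card_nbij' (fun j => j - v) (fun j => j + v)
  · intro j hj
    simp only [mem_coe, mem_filter, mem_range] at hj ⊢
    rw [gap] at hj
    have := lam_conjPart_add_le hA h0 j t
    rw [Nat.sub_add_cancel (by omega), conjPart_le_iff hA h0]
    omega
  · intro j hj
    simp only [mem_coe, mem_filter, mem_range] at hj ⊢
    have := (conjPart_le_iff hA h0).1 hj.2
    rw [gap]
    omega
  · intro j hj
    simp only [mem_coe, mem_filter, mem_range] at hj
    rw [gap] at hj
    dsimp only
    omega
  · intro j _
    dsimp only
    omega

theorem IsComplement.card_filter_conjPart_le (hc : IsComplement a b lam mu) (t v : ℕ) :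
    #{j ∈ range (a - v) | conjPart mu b j ≤ conjPart mu b (j + v) + t}
      = #{j ∈ range (a - v) | conjPart lam b j ≤ conjPart lam b (j + v) + t} := by
  apply card_nbij' (fun j => a - v - 1 - j) (fun j => a - v - 1 - j)
  · intro j hj
    simp only [coe_filter, mem_range, Set.mem_ofPred_eq] at hj ⊢
    rw [hc.conjPart_eq (by omega), hc.conjPart_eq (by omega)] at hj
    have := conjPart_le lam b (a - 1 - j)
    have := conjPart_le lam b (a - 1 - (j + v))
    rw [show a - v - 1 - j + v = a - 1 - j by omega, show a - 1 - (j + v) = a - v - 1 - j by omega]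
      at *
    omega
  · intro j hj
    simp only [coe_filter, mem_range, Set.mem_ofPred_eq] at hj ⊢
    rw [hc.conjPart_eq (by omega), hc.conjPart_eq (by omega)]
    have := conjPart_le lam b (a - 1 - (a - v - 1 - j))
    have := conjPart_le lam b (a - 1 - (a - v - 1 - j + v))
    rw [show a - 1 - (a - v - 1 - j) = j + v by omega,
      show a - 1 - (a - v - 1 - j + v) = j by omega] at *
    omega
  all_goals
    intro j hj
    simp only [coe_filter, mem_range, Set.mem_ofPred_eq] at hj ⊢
    omega

theorem gapProd_eq_of_isComplement (hc : IsComplement a b lam mu)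
    (hlamA : Antitone lam) (hlam0 : ∀ i, b ≤ i → lam i = 0)
    (hmuA : Antitone mu) (hmu0 : ∀ i, b ≤ i → mu i = 0) (x k : ℝ) :
    gapProd lam a b x k = gapProd mu a b x k := by
  refine prod_congr rfl fun t _ => ?_
  have hgap : (range a).val.map (gap lam b t) = (range a).val.map (gap mu b t) :=
    map_val_eq_of_card_filter_le_eq _ _ _ fun v => by
      rw [card_filter_le_gap hlamA hlam0, card_filter_le_gap hmuA hmu0, hc.card_filter_conjPart_le]
  have := congrArg (fun m => (m.map fun v : ℕ => x - k * ((t : ℝ) + 1) + v).prod) hgap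
  simpa only [Multiset.map_map, Function.comp_def, prod_map_val] using this

end

theorem stmt_7_general (a b : ℕ) (lam mu : ℕ → ℕ) (k x : ℝ)
    (hlamA : Antitone lam) (hmuA : Antitone mu)
    (hlam0 : ∀ i, b ≤ i → lam i = 0) (hmu0 : ∀ i, b ≤ i → mu i = 0)
    (hcomp : ∀ i < b, lam i + mu (b - 1 - i) = a)
    (hd1 : ∀ i < b, ∀ j < lam i,
      (lam i : ℝ) - ((j : ℝ) + 1) + k * ((i : ℝ) - (conjPart lam b j : ℝ)) + x ≠ 0)
    (hd2 : ∀ i < b, ∀ j < mu i,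
      (mu i : ℝ) - ((j : ℝ) + 1) + k * ((i : ℝ) - (conjPart mu b j : ℝ)) + x ≠ 0) :
    phiP lam b b x k = phiP mu b b x k := by
  have hc : IsComplement a b lam mu := hcomp
  rw [phiP_eq_div, phiP_eq_div, div_eq_div_iff (phiDen_ne_zero hd1) (phiDen_ne_zero hd2),
    phiNum_mul_phiDen_of_isComplement hlamA hlam0 hc,
    gapProd_eq_of_isComplement hc hlamA hlam0 hmuA hmu0,
    ← phiNum_mul_phiDen_of_isComplement hmuA hmu0 hc.symm]

/-- If λ and μ are complementary partitions in an a×b rectangle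
(λᵢ + μ_{b−i+1} = a), then φ_b(λ,x) = φ_b(μ,x) as rational functions of x and k,
i.e. for all x, k for which the denominators do not vanish. -/
theorem stmt_7 (a b : ℕ) (lam mu : ℕ → ℕ) (k x : ℝ)
    (hlamA : Antitone lam) (hmuA : Antitone mu)
    (hlam0 : ∀ i, b ≤ i → lam i = 0) (hmu0 : ∀ i, b ≤ i → mu i = 0)
    (hlamle : ∀ i, lam i ≤ a) (hmule : ∀ i, mu i ≤ a)
    (hcomp : ∀ i < b, lam i + mu (b - 1 - i) = a)
    (hd1 : ∀ i < b, ∀ j < lam i,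
      (lam i : ℝ) - ((j : ℝ) + 1) + k * ((i : ℝ) - (conjPart lam b j : ℝ)) + x ≠ 0)
    (hd2 : ∀ i < b, ∀ j < mu i,
      (mu i : ℝ) - ((j : ℝ) + 1) + k * ((i : ℝ) - (conjPart mu b j : ℝ)) + x ≠ 0) :
    phiP lam b b x k = phiP mu b b x k :=
  stmt_7_general a b lam mu k x hlamA hmuA hlam0 hmu0 hcomp hd1 hd2
end

section
/- Let λ, μ be partitions, a ≥ μ₁ an integer, N ≥ l(λ) + l(μ), and let ν = (λ₁+a, …, λ_r+a, a, …, a, a−μ_s, …, a−μ₁) be the partition of length N obtained by joining λ (shifted by a) and the complement of μ. Define φ_N(λ,x) = Π_{(i,j)∈λ} ((j−1)+k(i−1−N)+x)/(λᵢ−j+k(i−1−λ'_j)+x). Then φ_N(ν,x) = φ_N(λ,x) · φ_N(μ,x) · Π_{i=1}^{l(λ)} Π_{j=1}^{l(μ')} [(λᵢ+j−1+k(i−1−N)+x)/(j−1+k(i−1−N)+x)] · [(j−1+k(i−1+μ'_j−N)+x)/(λᵢ+j−1+k(i−1+μ'_j−N)+x)], as rational functions in x and k. -/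
/-- The partition ν = (λ₁+a, …, λ_r+a, a, …, a, a−μ_s, …, a−μ₁) of length N. -/
def nuJoin (lam mu : ℕ → ℕ) (r s N a : ℕ) : ℕ → ℕ := fun i =>
  if i < r then lam i + a
  else if i < N - s then a
  else if i < N then a - mu (N - 1 - i)
  else 0

/-!
Row `i < N - s` of `ν` has length `λᵢ + a`. Its first `λᵢ` content factors, and its hook factors
in the columns `≥ a` (where `ν'_{a+j} = λ'_j`), are those of `λ` and give `φ_N(λ, x)`. In the first
`a` columns `ν'_j = N - μ'_{a-1-j}`, so after reflecting these columns the remaining factors see `λ`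
only through the shifts `λᵢ`, and what is left is the case `λ = ∅`: an identity between the
(arm, leg) pairs of the boxes of `μ` and of its complement in the `s × a` rectangle. Sorted by leg,
both sides become products over intervals of arms with the same left endpoints and the same
multiset of right endpoints, so each level telescopes.
-/

open Finset

def consRow (a : ℕ) (mu : ℕ → ℕ) : ℕ → ℕ
  | 0 => a
  | c + 1 => mu c

@[simp] lemma consRow_zero (a : ℕ) (mu : ℕ → ℕ) : consRow a mu 0 = a := rfl

@[simp] lemma consRow_succ (a : ℕ) (mu : ℕ → ℕ) (c : ℕ) : consRow a mu (c + 1) = mu c := rfl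

lemma consRow_antitone {a : ℕ} {mu : ℕ → ℕ} (hA : Antitone mu) (ha : mu 0 ≤ a) :
    Antitone (consRow a mu) :=
  antitone_nat_of_succ_le fun
    | 0 => ha
    | c + 1 => hA c.le_succ

section Conjugate

variable {mu : ℕ → ℕ} {N s : ℕ}

lemma conjPart_le_s9 (h0 : ∀ t, s ≤ t → mu t = 0) (j : ℕ) : conjPart mu N j ≤ s := by
  refine (card_le_card fun i hi => ?_).trans (card_range s).le
  simp only [mem_filter, mem_range] at hi ⊢
  by_contra! h
  simp [h0 i h] at hi

lemma lt_conjPart_iff_s9 (hA : Antitone mu) (h0 : ∀ t, s ≤ t → mu t = 0) (hs : s ≤ N) {t j : ℕ} :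
    t < conjPart mu N j ↔ j < mu t := by
  constructor
  · intro h
    by_contra! hle
    have hsub : (range N).filter (fun i => j < mu i) ⊆ range t := fun i hi => by
      simp only [mem_filter, mem_range] at hi ⊢
      by_contra! hti
      exact absurd (hA hti) (by omega)
    exact absurd ((card_le_card hsub).trans_eq (card_range t)) (by unfold conjPart at h; omega)
  · intro h
    have hts : t < s := by
      by_contra! hst
      simp [h0 t hst] at h
    have hsub : range (t + 1) ⊆ (range N).filter (fun i => j < mu i) := fun i hi => by
      simp only [mem_filter, mem_range] at hi ⊢
      exact ⟨by omega, h.trans_le (hA (by omega))⟩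
    simpa [conjPart] using card_le_card hsub

lemma conjPart_eq_of_mem_Ico (hA : Antitone mu) (h0 : ∀ t, s ≤ t → mu t = 0) (hs : s ≤ N)
    {a c j : ℕ} (hj : j ∈ Ico (mu c) (consRow a mu c)) : conjPart mu N j = c := by
  rw [mem_Ico] at hj
  have hc : ¬ c < conjPart mu N j := by rw [lt_conjPart_iff_s9 hA h0 hs]; omega
  cases c with
  | zero => omega
  | succ c =>
    have : c < conjPart mu N j := (lt_conjPart_iff_s9 hA h0 hs).2 hj.2
    omega

lemma conjPart_eq_of_forall_lt_iff {lam : ℕ → ℕ} {n j c : ℕ} (hc : c ≤ n)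
    (h : ∀ i < n, i < c ↔ j < lam i) : conjPart lam n j = c := by
  have : (range n).filter (fun i => j < lam i) = range c := by
    ext i
    simp only [mem_filter, mem_range]
    constructor
    · exact fun hi => (h i hi.1).2 hi.2
    · exact fun hi => ⟨by omega, (h i (by omega)).1 hi⟩
  simp [conjPart, this]

lemma prod_boxes_comm {M : Type*} [CommMonoid M] (hA : Antitone mu)
    (h0 : ∀ t, s ≤ t → mu t = 0) (hs : s ≤ N) (G : ℕ → ℕ → M) :
    ∏ t ∈ range s, ∏ j ∈ range (mu t), G t j =
      ∏ j ∈ range (mu 0), ∏ t ∈ range (conjPart mu N j), G t j := by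
  refine prod_comm' fun t j => ?_
  simp only [mem_range, lt_conjPart_iff_s9 hA h0 hs]
  constructor
  · exact fun h => ⟨h.2, h.2.trans_le (hA (Nat.zero_le t))⟩
  · intro h
    refine ⟨?_, h.1⟩
    by_contra! hst
    simp [h0 t hst] at h

end Conjugate

section Products

variable {M : Type*} [CommMonoid M]

lemma prod_Ico_eq_prod_range_prod_Ico_of_antitone {w : ℕ → ℕ} (hw : Antitone w) (g : ℕ → M)
    (n : ℕ) : ∏ m ∈ Ico (w n) (w 0), g m = ∏ c ∈ range n, ∏ m ∈ Ico (w (c + 1)) (w c), g m := by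
  induction n with
  | zero => simp
  | succ n ih =>
    rw [prod_range_succ, ← ih, mul_comm,
      prod_Ico_consecutive g (hw n.le_succ) (hw (Nat.zero_le n))]

lemma prod_Ico_sub_one_sub {n p q : ℕ} (hq : q ≤ n) (g : ℕ → M) :
    ∏ j ∈ Ico p q, g (n - 1 - j) = ∏ m ∈ Ico (n - q) (n - p), g m := by
  rcases Nat.eq_zero_or_pos n with rfl | hn
  · simp [Nat.le_zero.1 hq]
  · simpa [Nat.sub_add_cancel hn] using prod_Ico_reflect g p (n := n - 1) (by omega)

lemma prod_range_mul_prod_Ico_telescope {A B : ℕ → ℕ} (hAB : ∀ d, A d ≤ B d)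
    (hAB' : ∀ d, A d ≤ B (d + 1)) (g : ℕ → M) (n : ℕ) :
    (∏ m ∈ range (B 0), g m) * ∏ d ∈ range n, ∏ m ∈ Ico (A d) (B (d + 1)), g m =
      (∏ m ∈ range (B n), g m) * ∏ d ∈ range n, ∏ m ∈ Ico (A d) (B d), g m := by
  induction n with
  | zero => simp
  | succ n ih =>
    rw [prod_range_succ, ← mul_assoc, ih, prod_range_succ,
      ← prod_range_mul_prod_Ico g (hAB n), ← prod_range_mul_prod_Ico g (hAB' n)]
    ac_rfl

lemma prod_range_prod_range_sub_comm (s : ℕ) (X : ℕ → ℕ → M) :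
    ∏ t ∈ range s, ∏ b ∈ range (s - t), X t b = ∏ b ∈ range s, ∏ t ∈ range (s - b), X t b :=
  prod_comm' fun t b => by simp only [mem_range]; omega

lemma prod_range_prod_range_eq_of_eq_zero {lam : ℕ → ℕ} {m n : ℕ} (hmn : m ≤ n)
    (h0 : ∀ i, m ≤ i → lam i = 0) (G : ℕ → ℕ → M) :
    ∏ i ∈ range n, ∏ j ∈ range (lam i), G i j = ∏ i ∈ range m, ∏ j ∈ range (lam i), G i j :=
  (prod_subset (range_subset_range.2 hmn) fun i _ hi => by
    simp [h0 i (by simpa using hi)]).symm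

lemma prod_range_eq_mul_prod_range_sub_one_sub {N s : ℕ} (hs : s ≤ N) (F : ℕ → M) :
    ∏ i ∈ range N, F i = (∏ i ∈ range (N - s), F i) * ∏ t ∈ range s, F (N - 1 - t) := by
  rw [← prod_range_mul_prod_Ico F (Nat.sub_le N s), prod_Ico_eq_prod_range, Nat.sub_sub_self hs,
    ← prod_range_reflect (fun t => F (N - s + t)) s]
  congr 1
  refine prod_congr rfl fun t ht => ?_
  rw [mem_range] at ht
  congr 1
  omega

lemma prod_range_prod_range_eq_split {r n b a : ℕ} (hr : r ≤ n)
    (hb : b ≤ a) (F : ℕ → ℕ → M) :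
    ∏ i ∈ range n, ∏ j ∈ range a, F i j =
      (∏ i ∈ range r, ∏ j ∈ range b, F i j) * (∏ i ∈ Ico r n, ∏ j ∈ range b, F i j) *
        ∏ i ∈ range n, ∏ j ∈ Ico b a, F i j := by
  rw [prod_range_mul_prod_Ico (fun i => ∏ j ∈ range b, F i j) hr, ← prod_mul_distrib]
  exact prod_congr rfl fun i _ => (prod_range_mul_prod_Ico _ hb).symm

end Products

section HookComplement

variable {M : Type*} [CommMonoid M] {mu : ℕ → ℕ} {N s a : ℕ}

lemma prod_hook_row_eq (hA : Antitone mu) (h0 : ∀ t, s ≤ t → mu t = 0) (hs : s ≤ N)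
    (t : ℕ) (f : ℕ → ℕ → M) :
    ∏ j ∈ range (mu t), f (mu t - 1 - j) (conjPart mu N j - t) =
      ∏ b ∈ range (s - t), ∏ m ∈ Ico (mu t - mu (t + b)) (mu t - mu (t + b + 1)), f m (b + 1) := by
  have hw : Antitone fun b => mu (t + b) := fun b b' h => hA (by omega)
  have hpart := prod_Ico_eq_prod_range_prod_Ico_of_antitone hw
    (fun j => f (mu t - 1 - j) (conjPart mu N j - t)) (s - t)
  rw [h0 _ (by omega), add_zero, Nat.Ico_zero_eq_range] at hpart
  rw [hpart]
  refine prod_congr rfl fun b _ => ?_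
  rw [← prod_Ico_sub_one_sub (hA (by omega))]
  refine prod_congr rfl fun j hj => ?_
  rw [conjPart_eq_of_mem_Ico (a := 0) (c := t + b + 1) hA h0 hs hj]
  congr 1
  omega

lemma prod_outer_row_eq (hA : Antitone mu) (h0 : ∀ t, s ≤ t → mu t = 0) (hs : s ≤ N)
    (ha : mu 0 ≤ a) (t : ℕ) (f : ℕ → ℕ → M) :
    ∏ j ∈ range (a - mu t), f j (t + 1 - conjPart mu N (j + mu t)) =
      ∏ c ∈ range (t + 1), ∏ m ∈ Ico (mu c - mu t) (consRow a mu c - mu t), f m (t - c + 1) := by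
  have hw : Antitone fun c => consRow a mu c - mu t := fun c c' h =>
    Nat.sub_le_sub_right (consRow_antitone hA ha h) _
  have hpart := prod_Ico_eq_prod_range_prod_Ico_of_antitone hw
    (fun j => f j (t + 1 - conjPart mu N (j + mu t))) (t + 1)
  simp only [consRow_zero, consRow_succ, Nat.sub_self, Nat.Ico_zero_eq_range] at hpart
  rw [hpart]
  refine prod_congr rfl fun c hc => prod_congr rfl fun m hm => ?_
  rw [mem_range] at hc
  have hct : mu t ≤ mu c := hA (by omega)
  have hmem : m + mu t ∈ Ico (mu c) (consRow a mu c) := by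
    simp only [mem_Ico] at hm ⊢
    omega
  rw [conjPart_eq_of_mem_Ico hA h0 hs hmem]
  congr 1
  omega

lemma prod_level_eq (hA : Antitone mu) (h0 : ∀ t, s ≤ t → mu t = 0) (ha : mu 0 ≤ a) {b : ℕ}
    (hb : b < s) (g : ℕ → M) :
    (∏ d ∈ range (s - b), ∏ m ∈ Ico (mu d - mu (d + b)) (mu d - mu (d + b + 1)), g m) *
        ∏ m ∈ range (a - mu b), g m =
      (∏ m ∈ range (mu (s - 1 - b)), g m) *
        ∏ d ∈ range (s - b), ∏ m ∈ Ico (mu d - mu (d + b)) (consRow a mu d - mu (d + b)), g m := by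
  have htel := prod_range_mul_prod_Ico_telescope (A := fun d => mu d - mu (d + b))
    (B := fun d => consRow a mu d - mu (d + b))
    (fun d => Nat.sub_le_sub_right (consRow_antitone hA ha d.le_succ) _)
    (fun d => Nat.sub_le_sub_left (hA (by omega)) _) g (s - b)
  obtain ⟨n, hn⟩ : ∃ n, s - b = n + 1 := ⟨s - b - 1, by omega⟩
  have hBn : consRow a mu (s - b) - mu (s - b + b) = mu (s - 1 - b) := by
    rw [hn, show n + 1 + b = s by omega, h0 s le_rfl, show s - 1 - b = n by omega]
    rfl
  simp only [consRow_zero, consRow_succ, zero_add, Nat.add_right_comm _ 1 b, hBn] at htel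
  rw [mul_comm, htel]

theorem prod_hook_mul_prod_outer (hA : Antitone mu) (h0 : ∀ t, s ≤ t → mu t = 0) (hs : s ≤ N)
    (ha : mu 0 ≤ a) (f : ℕ → ℕ → M) :
    (∏ t ∈ range s, ∏ j ∈ range (mu t), f (mu t - 1 - j) (conjPart mu N j - t)) *
        ∏ t ∈ range s, ∏ j ∈ range (a - mu t), f j (t + 1) =
      (∏ t ∈ range s, ∏ j ∈ range (mu t), f j (s - t)) *
        ∏ t ∈ range s, ∏ j ∈ range (a - mu t), f j (t + 1 - conjPart mu N (j + mu t)) := by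
  have hlhs : ∏ t ∈ range s, ∏ j ∈ range (mu t), f (mu t - 1 - j) (conjPart mu N j - t) =
      ∏ b ∈ range s, ∏ d ∈ range (s - b),
        ∏ m ∈ Ico (mu d - mu (d + b)) (mu d - mu (d + b + 1)), f m (b + 1) := by
    rw [prod_congr rfl fun t _ => prod_hook_row_eq hA h0 hs t f, prod_range_prod_range_sub_comm]
  have hrhs₁ : ∏ t ∈ range s, ∏ j ∈ range (mu t), f j (s - t) =
      ∏ b ∈ range s, ∏ m ∈ range (mu (s - 1 - b)), f m (b + 1) := by
    rw [← prod_range_reflect (fun t => ∏ j ∈ range (mu t), f j (s - t)) s]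
    refine prod_congr rfl fun b hb => ?_
    rw [show s - (s - 1 - b) = b + 1 by rw [mem_range] at hb; omega]
  have hrhs₂ : ∏ t ∈ range s, ∏ j ∈ range (a - mu t), f j (t + 1 - conjPart mu N (j + mu t)) =
      ∏ b ∈ range s, ∏ d ∈ range (s - b),
        ∏ m ∈ Ico (mu d - mu (d + b)) (consRow a mu d - mu (d + b)), f m (b + 1) := by
    rw [prod_congr rfl fun t _ => prod_outer_row_eq hA h0 hs ha t f,
      ← prod_range_prod_range_sub_comm, ← prod_range_diag_flip]
    refine prod_congr rfl fun t _ => prod_congr rfl fun c hc => ?_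
    rw [Nat.add_sub_cancel' (by rw [mem_range] at hc; omega)]
  rw [hlhs, hrhs₁, hrhs₂, ← prod_mul_distrib, ← prod_mul_distrib]
  exact prod_congr rfl fun b hb => prod_level_eq hA h0 ha (mem_range.1 hb) (f · (b + 1))

end HookComplement

noncomputable def contentProd (lam : ℕ → ℕ) (rows : ℕ) (p x k : ℝ) : ℝ :=
  ∏ i ∈ range rows, ∏ j ∈ range (lam i), ((j : ℝ) + k * ((i : ℝ) - p) + x)

noncomputable def hookProd (lam : ℕ → ℕ) (rows : ℕ) (x k : ℝ) : ℝ :=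
  ∏ i ∈ range rows, ∏ j ∈ range (lam i),
    ((lam i : ℝ) - ((j : ℝ) + 1) + k * ((i : ℝ) - (conjPart lam rows j : ℝ)) + x)

lemma phiP_eq_div_s9 (lam : ℕ → ℕ) (rows : ℕ) (p x k : ℝ) :
    phiP lam rows p x k = contentProd lam rows p x k / hookProd lam rows x k := by
  simp only [phiP, contentProd, hookProd, prod_div_distrib]

section Complement

variable {mu : ℕ → ℕ} {N s a : ℕ}

lemma prod_columns_mul_prod_boxes (hA : Antitone mu) (h0 : ∀ t, s ≤ t → mu t = 0) (hs : s ≤ N)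
    (x k : ℝ) :
    (∏ i ∈ range (N - s), ∏ j ∈ range (mu 0), ((j : ℝ) + k * ((i : ℝ) - N) + x)) *
        ∏ t ∈ range s, ∏ j ∈ range (mu t), ((j : ℝ) - k * ((s - t : ℕ) : ℝ) + x) =
      (∏ i ∈ range (N - s), ∏ j ∈ range (mu 0),
          ((j : ℝ) + k * ((i : ℝ) + (conjPart mu N j : ℝ) - N) + x)) *
        contentProd mu N N x k := by
  rw [contentProd, prod_range_prod_range_eq_of_eq_zero hs h0, prod_boxes_comm hA h0 hs,
    prod_boxes_comm hA h0 hs, prod_comm, prod_comm (s := range (N - s)), ← prod_mul_distrib,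
    ← prod_mul_distrib]
  refine prod_congr rfl fun j _ => ?_
  have hc := conjPart_le_s9 (N := N) h0 j
  set c := conjPart mu N j
  set g : ℕ → ℝ := fun i => (j : ℝ) + k * ((i : ℝ) - N) + x
  calc (∏ i ∈ range (N - s), g i) * ∏ t ∈ range c, ((j : ℝ) - k * ((s - t : ℕ) : ℝ) + x)
      = (∏ i ∈ range (N - s), g i) * ∏ t ∈ range c, g (N - s + t) := by
        congr 1
        refine prod_congr rfl fun t ht => ?_
        rw [mem_range] at ht
        simp only [g]
        push_cast [Nat.cast_sub (show t ≤ s by omega), Nat.cast_sub hs]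
        ring
    _ = (∏ i ∈ range (N - s), g (c + i)) * ∏ t ∈ range c, g t := by
        rw [← prod_range_add, add_comm, prod_range_add, mul_comm]
    _ = _ := by
        congr 1
        refine prod_congr rfl fun i _ => ?_
        simp only [g]
        push_cast
        ring

-- The case `λ = ∅` of the theorem, cleared of denominators and of the columns `j ≥ μ₀`.
theorem hookProd_complement_eq (hA : Antitone mu) (h0 : ∀ t, s ≤ t → mu t = 0) (hs : s ≤ N)
    (ha : mu 0 ≤ a) (x k : ℝ) :
    (∏ i ∈ range (N - s), ∏ j ∈ range (mu 0), ((j : ℝ) + k * ((i : ℝ) - N) + x)) *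
        (∏ t ∈ range s, ∏ j ∈ range (a - mu t), ((j : ℝ) - k * ((t : ℝ) + 1) + x)) *
        hookProd mu N x k =
      (∏ i ∈ range (N - s), ∏ j ∈ range (mu 0),
          ((j : ℝ) + k * ((i : ℝ) + (conjPart mu N j : ℝ) - N) + x)) *
        (∏ t ∈ range s, ∏ j ∈ range (a - mu t),
          ((j : ℝ) + k * ((conjPart mu N (j + mu t) : ℝ) - t - 1) + x)) *
        contentProd mu N N x k := by
  have hcore := prod_hook_mul_prod_outer hA h0 hs ha fun m n => (m : ℝ) - k * n + x
  have hhook : hookProd mu N x k =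
      ∏ t ∈ range s, ∏ j ∈ range (mu t),
        (((mu t - 1 - j : ℕ) : ℝ) - k * ((conjPart mu N j - t : ℕ) : ℝ) + x) := by
    rw [hookProd, prod_range_prod_range_eq_of_eq_zero hs h0]
    refine prod_congr rfl fun t _ => prod_congr rfl fun j hj => ?_
    rw [mem_range] at hj
    have htj : t < conjPart mu N j := (lt_conjPart_iff_s9 hA h0 hs).2 hj
    rw [Nat.sub_sub]
    push_cast [Nat.cast_sub (show 1 + j ≤ mu t by omega), Nat.cast_sub htj.le]
    ring
  have houter : ∏ t ∈ range s, ∏ j ∈ range (a - mu t),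
      ((j : ℝ) + k * ((conjPart mu N (j + mu t) : ℝ) - t - 1) + x) =
      ∏ t ∈ range s, ∏ j ∈ range (a - mu t),
        ((j : ℝ) - k * ((t + 1 - conjPart mu N (j + mu t) : ℕ) : ℝ) + x) := by
    refine prod_congr rfl fun t _ => prod_congr rfl fun j _ => ?_
    have hct : ¬ t < conjPart mu N (j + mu t) := by rw [lt_conjPart_iff_s9 hA h0 hs]; omega
    push_cast [Nat.cast_sub (show conjPart mu N (j + mu t) ≤ t + 1 by omega)]
    ring
  rw [hhook, houter]
  push_cast at hcore
  linear_combination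
    (∏ i ∈ range (N - s), ∏ j ∈ range (mu 0), ((j : ℝ) + k * ((i : ℝ) - N) + x)) * hcore +
    (∏ t ∈ range s, ∏ j ∈ range (a - mu t),
        ((j : ℝ) - k * ((t + 1 - conjPart mu N (j + mu t) : ℕ) : ℝ) + x)) *
      prod_columns_mul_prod_boxes hA h0 hs x k

end Complement

section Join

variable {lam mu : ℕ → ℕ} {r s N a : ℕ}

lemma nuJoin_of_lt_sub (hlam0 : ∀ i, r ≤ i → lam i = 0) {i : ℕ} (hi : i < N - s) :
    nuJoin lam mu r s N a i = lam i + a := by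
  by_cases hir : i < r
  · simp [nuJoin, hir]
  · simp [nuJoin, hir, hi, hlam0 i (not_lt.1 hir)]

lemma nuJoin_sub_one_sub (hN : r + s ≤ N) {t : ℕ} (ht : t < s) :
    nuJoin lam mu r s N a (N - 1 - t) = a - mu t := by
  simp [nuJoin, show ¬ N - 1 - t < r by omega, show ¬ N - 1 - t < N - s by omega,
    show N - 1 - t < N by omega, show N - 1 - (N - 1 - t) = t by omega]

lemma conjPart_nuJoin_add (hlam0 : ∀ i, r ≤ i → lam i = 0) (j : ℕ) :
    conjPart (nuJoin lam mu r s N a) N (a + j) = conjPart lam N j := by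
  unfold conjPart
  congr 1
  refine filter_congr fun i _ => ?_
  have := hlam0 i
  unfold nuJoin
  split_ifs <;> omega

lemma conjPart_nuJoin_of_lt (hmuA : Antitone mu) (hmu0 : ∀ t, s ≤ t → mu t = 0)
    (hN : r + s ≤ N) {j : ℕ} (hj : j < a) :
    conjPart (nuJoin lam mu r s N a) N j = N - conjPart mu N (a - 1 - j) := by
  refine conjPart_eq_of_forall_lt_iff (Nat.sub_le _ _) fun i hi => ?_
  have hc := conjPart_le_s9 (N := N) hmu0 (a - 1 - j)
  have hiff := lt_conjPart_iff_s9 (N := N) (t := N - 1 - i) (j := a - 1 - j) hmuA hmu0 (by omega)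
  unfold nuJoin
  split_ifs <;> omega

lemma contentProd_nuJoin (hlam0 : ∀ i, r ≤ i → lam i = 0) (hN : r + s ≤ N) (x k : ℝ) :
    contentProd (nuJoin lam mu r s N a) N N x k =
      contentProd lam N N x k *
        (∏ i ∈ range (N - s), ∏ j ∈ range a, ((lam i : ℝ) + j + k * ((i : ℝ) - N) + x)) *
        ∏ t ∈ range s, ∏ j ∈ range (a - mu t), ((j : ℝ) - k * ((t : ℝ) + 1) + x) := by
  rw [contentProd, prod_range_eq_mul_prod_range_sub_one_sub (show s ≤ N by omega), contentProd,
    prod_range_prod_range_eq_of_eq_zero (Nat.sub_le N s) fun i hi => hlam0 i (by omega),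
    ← prod_mul_distrib]
  congr 1
  · refine prod_congr rfl fun i hi => ?_
    rw [nuJoin_of_lt_sub hlam0 (mem_range.1 hi), prod_range_add]
    congr 1
    refine prod_congr rfl fun j _ => ?_
    push_cast
    ring
  · refine prod_congr rfl fun t ht => ?_
    rw [mem_range] at ht
    rw [nuJoin_sub_one_sub hN ht]
    refine prod_congr rfl fun j _ => ?_
    rw [Nat.sub_sub]
    push_cast [Nat.cast_sub (show 1 + t ≤ N by omega)]
    ring

lemma hookProd_nuJoin (hmuA : Antitone mu) (hmu0 : ∀ t, s ≤ t → mu t = 0)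
    (hlam0 : ∀ i, r ≤ i → lam i = 0) (ha : mu 0 ≤ a) (hN : r + s ≤ N) (x k : ℝ) :
    hookProd (nuJoin lam mu r s N a) N x k =
      hookProd lam N x k *
        (∏ i ∈ range (N - s), ∏ j ∈ range a,
          ((lam i : ℝ) + j + k * ((i : ℝ) + (conjPart mu N j : ℝ) - N) + x)) *
        ∏ t ∈ range s, ∏ j ∈ range (a - mu t),
          ((j : ℝ) + k * ((conjPart mu N (j + mu t) : ℝ) - t - 1) + x) := by
  have hs : s ≤ N := by omega
  rw [hookProd, prod_range_eq_mul_prod_range_sub_one_sub hs, hookProd,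
    prod_range_prod_range_eq_of_eq_zero (Nat.sub_le N s) fun i hi => hlam0 i (by omega),
    ← prod_mul_distrib]
  congr 1
  · refine prod_congr rfl fun i hi => ?_
    rw [nuJoin_of_lt_sub hlam0 (mem_range.1 hi), add_comm (lam i) a, prod_range_add, mul_comm,
      ← prod_range_reflect _ a]
    congr 1
    · refine prod_congr rfl fun j _ => ?_
      rw [conjPart_nuJoin_add hlam0]
      push_cast
      ring
    · refine prod_congr rfl fun j hj => ?_
      rw [mem_range] at hj
      rw [conjPart_nuJoin_of_lt hmuA hmu0 hN (show a - 1 - j < a by omega),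
        show a - 1 - (a - 1 - j) = j by omega, Nat.sub_sub]
      push_cast [Nat.cast_sub (show 1 + j ≤ a by omega),
        Nat.cast_sub (conjPart_le_s9 hmu0 j |>.trans hs)]
      ring
  · refine prod_congr rfl fun t ht => ?_
    rw [mem_range] at ht
    have hta : mu t ≤ a := (hmuA (Nat.zero_le t)).trans ha
    rw [nuJoin_sub_one_sub hN ht, ← prod_range_reflect _ (a - mu t)]
    refine prod_congr rfl fun j hj => ?_
    rw [mem_range] at hj
    rw [conjPart_nuJoin_of_lt hmuA hmu0 hN (show a - mu t - 1 - j < a by omega),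
      show a - 1 - (a - mu t - 1 - j) = j + mu t by omega]
    push_cast [Nat.cast_sub (show a - mu t - 1 - j ≤ a - mu t by omega), Nat.cast_sub hta,
      Nat.cast_sub (show t ≤ N - 1 by omega), Nat.cast_sub (show 1 ≤ N by omega),
      Nat.cast_sub (conjPart_le_s9 hmu0 (j + mu t) |>.trans hs),
      Nat.cast_sub (show j ≤ a - mu t - 1 by omega), Nat.cast_sub (show 1 ≤ a - mu t by omega)]
    ring

theorem contentProd_nuJoin_mul (hmuA : Antitone mu)
    (hmu0 : ∀ t, s ≤ t → mu t = 0) (hlam0 : ∀ i, r ≤ i → lam i = 0) (ha : mu 0 ≤ a)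
    (hN : r + s ≤ N) (x k : ℝ) :
    contentProd (nuJoin lam mu r s N a) N N x k * hookProd lam N x k * hookProd mu N x k *
        ∏ i ∈ range r, ∏ j ∈ range (mu 0), (((j : ℝ) + k * ((i : ℝ) - N) + x) *
          ((lam i : ℝ) + j + k * ((i : ℝ) + (conjPart mu N j : ℝ) - N) + x)) =
      hookProd (nuJoin lam mu r s N a) N x k * contentProd lam N N x k * contentProd mu N N x k *
        ∏ i ∈ range r, ∏ j ∈ range (mu 0), (((lam i : ℝ) + j + k * ((i : ℝ) - N) + x) *
          ((j : ℝ) + k * ((i : ℝ) + (conjPart mu N j : ℝ) - N) + x)) := by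
  have hs : s ≤ N := by omega
  have hr : r ≤ N - s := by omega
  have hmid₁ : ∏ i ∈ Ico r (N - s), ∏ j ∈ range (mu 0), ((lam i : ℝ) + j + k * ((i : ℝ) - N) + x) =
      ∏ i ∈ Ico r (N - s), ∏ j ∈ range (mu 0), ((j : ℝ) + k * ((i : ℝ) - N) + x) :=
    prod_congr rfl fun i hi => by simp [hlam0 i (mem_Ico.1 hi).1]
  have hmid₂ : ∏ i ∈ Ico r (N - s), ∏ j ∈ range (mu 0),
        ((lam i : ℝ) + j + k * ((i : ℝ) + (conjPart mu N j : ℝ) - N) + x) =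
      ∏ i ∈ Ico r (N - s), ∏ j ∈ range (mu 0),
        ((j : ℝ) + k * ((i : ℝ) + (conjPart mu N j : ℝ) - N) + x) :=
    prod_congr rfl fun i hi => by simp [hlam0 i (mem_Ico.1 hi).1]
  have htail : ∏ i ∈ range (N - s), ∏ j ∈ Ico (mu 0) a,
        ((lam i : ℝ) + j + k * ((i : ℝ) + (conjPart mu N j : ℝ) - N) + x) =
      ∏ i ∈ range (N - s), ∏ j ∈ Ico (mu 0) a, ((lam i : ℝ) + j + k * ((i : ℝ) - N) + x) :=
    prod_congr rfl fun i _ => prod_congr rfl fun j hj => by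
      simp [conjPart_eq_of_mem_Ico (c := 0) hmuA hmu0 hs (by simpa using hj)]
  have hcompl := hookProd_complement_eq hmuA hmu0 hs ha x k
  rw [← prod_range_mul_prod_Ico _ hr, ← prod_range_mul_prod_Ico _ hr] at hcompl
  rw [contentProd_nuJoin hlam0 hN, hookProd_nuJoin hmuA hmu0 hlam0 ha hN,
    prod_range_prod_range_eq_split hr ha, prod_range_prod_range_eq_split hr ha, hmid₁, hmid₂,
    htail]
  simp only [prod_mul_distrib]
  linear_combination contentProd lam N N x k * hookProd lam N x k *
    (∏ i ∈ range r, ∏ j ∈ range (mu 0), ((lam i : ℝ) + j + k * ((i : ℝ) - N) + x)) *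
    (∏ i ∈ range r, ∏ j ∈ range (mu 0),
      ((lam i : ℝ) + j + k * ((i : ℝ) + (conjPart mu N j : ℝ) - N) + x)) *
    (∏ i ∈ range (N - s), ∏ j ∈ Ico (mu 0) a, ((lam i : ℝ) + j + k * ((i : ℝ) - N) + x)) * hcompl

end Join

theorem stmt_9_general (r s N a : ℕ) (lam mu : ℕ → ℕ) (k x : ℝ)
    (hmuA : Antitone mu)
    (hlam0 : ∀ i, r ≤ i → lam i = 0) (hmu0 : ∀ i, s ≤ i → mu i = 0)
    (ha : mu 0 ≤ a) (hN : r + s ≤ N)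
    (hdnu : ∀ i < N, ∀ j < nuJoin lam mu r s N a i,
      (nuJoin lam mu r s N a i : ℝ) - ((j : ℝ) + 1)
        + k * ((i : ℝ) - (conjPart (nuJoin lam mu r s N a) N j : ℝ)) + x ≠ 0)
    (hdlam : ∀ i < N, ∀ j < lam i,
      (lam i : ℝ) - ((j : ℝ) + 1) + k * ((i : ℝ) - (conjPart lam N j : ℝ)) + x ≠ 0)
    (hdmu : ∀ i < N, ∀ j < mu i,
      (mu i : ℝ) - ((j : ℝ) + 1) + k * ((i : ℝ) - (conjPart mu N j : ℝ)) + x ≠ 0)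
    (hdd1 : ∀ i < r, ∀ j < mu 0, (j : ℝ) + k * ((i : ℝ) - (N : ℝ)) + x ≠ 0)
    (hdd2 : ∀ i < r, ∀ j < mu 0,
      (lam i : ℝ) + (j : ℝ) + k * ((i : ℝ) + (conjPart mu N j : ℝ) - (N : ℝ)) + x ≠ 0) :
    phiP (nuJoin lam mu r s N a) N N x k =
      phiP lam N N x k * phiP mu N N x k *
        ∏ i ∈ Finset.range r, ∏ j ∈ Finset.range (mu 0),
          (((lam i : ℝ) + (j : ℝ) + k * ((i : ℝ) - (N : ℝ)) + x) /
              ((j : ℝ) + k * ((i : ℝ) - (N : ℝ)) + x)) *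
            (((j : ℝ) + k * ((i : ℝ) + (conjPart mu N j : ℝ) - (N : ℝ)) + x) /
              ((lam i : ℝ) + (j : ℝ) + k * ((i : ℝ) + (conjPart mu N j : ℝ) - (N : ℝ)) + x)) := by
  have hnu : hookProd (nuJoin lam mu r s N a) N x k ≠ 0 := prod_ne_zero_iff.2 fun i hi =>
    prod_ne_zero_iff.2 fun j hj => hdnu i (mem_range.1 hi) j (mem_range.1 hj)
  have hlam : hookProd lam N x k ≠ 0 := prod_ne_zero_iff.2 fun i hi =>
    prod_ne_zero_iff.2 fun j hj => hdlam i (mem_range.1 hi) j (mem_range.1 hj)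
  have hmu : hookProd mu N x k ≠ 0 := prod_ne_zero_iff.2 fun i hi =>
    prod_ne_zero_iff.2 fun j hj => hdmu i (mem_range.1 hi) j (mem_range.1 hj)
  have hE : ∏ i ∈ range r, ∏ j ∈ range (mu 0), (((j : ℝ) + k * ((i : ℝ) - N) + x) *
      ((lam i : ℝ) + j + k * ((i : ℝ) + (conjPart mu N j : ℝ) - N) + x)) ≠ 0 :=
    prod_ne_zero_iff.2 fun i hi => prod_ne_zero_iff.2 fun j hj => mul_ne_zero
      (hdd1 i (mem_range.1 hi) j (mem_range.1 hj)) (hdd2 i (mem_range.1 hi) j (mem_range.1 hj))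
  simp only [phiP_eq_div_s9, div_mul_div_comm, prod_div_distrib]
  rw [div_eq_div_iff hnu (mul_ne_zero (mul_ne_zero hlam hmu) hE)]
  linear_combination contentProd_nuJoin_mul hmuA hmu0 hlam0 ha hN x k

/-- φ_N(ν,x) = φ_N(λ,x) · φ_N(μ,x) · φ_N(λ,μ,x) as rational functions of
x and k, where ν is obtained by joining λ (shifted by a) with the complement of μ and
φ_N(λ,μ,x) is the explicit double product; stated for all x, k for which all denominators
involved are nonzero. -/
theorem stmt_9 (r s N a : ℕ) (lam mu : ℕ → ℕ) (k x : ℝ)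
    (hlamA : Antitone lam) (hmuA : Antitone mu)
    (hlam0 : ∀ i, r ≤ i → lam i = 0) (hmu0 : ∀ i, s ≤ i → mu i = 0)
    (hlampos : ∀ i < r, 0 < lam i) (hmupos : ∀ i < s, 0 < mu i)
    (ha : mu 0 ≤ a) (hN : r + s ≤ N)
    (hdnu : ∀ i < N, ∀ j < nuJoin lam mu r s N a i,
      (nuJoin lam mu r s N a i : ℝ) - ((j : ℝ) + 1)
        + k * ((i : ℝ) - (conjPart (nuJoin lam mu r s N a) N j : ℝ)) + x ≠ 0)
    (hdlam : ∀ i < N, ∀ j < lam i,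
      (lam i : ℝ) - ((j : ℝ) + 1) + k * ((i : ℝ) - (conjPart lam N j : ℝ)) + x ≠ 0)
    (hdmu : ∀ i < N, ∀ j < mu i,
      (mu i : ℝ) - ((j : ℝ) + 1) + k * ((i : ℝ) - (conjPart mu N j : ℝ)) + x ≠ 0)
    (hdd1 : ∀ i < r, ∀ j < mu 0, (j : ℝ) + k * ((i : ℝ) - (N : ℝ)) + x ≠ 0)
    (hdd2 : ∀ i < r, ∀ j < mu 0,
      (lam i : ℝ) + (j : ℝ) + k * ((i : ℝ) + (conjPart mu N j : ℝ) - (N : ℝ)) + x ≠ 0) :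
    phiP (nuJoin lam mu r s N a) N N x k =
      phiP lam N N x k * phiP mu N N x k *
        ∏ i ∈ Finset.range r, ∏ j ∈ Finset.range (mu 0),
          (((lam i : ℝ) + (j : ℝ) + k * ((i : ℝ) - (N : ℝ)) + x) /
              ((j : ℝ) + k * ((i : ℝ) - (N : ℝ)) + x)) *
            (((j : ℝ) + k * ((i : ℝ) + (conjPart mu N j : ℝ) - (N : ℝ)) + x) /
              ((lam i : ℝ) + (j : ℝ) + k * ((i : ℝ) + (conjPart mu N j : ℝ) - (N : ℝ)) + x)) :=
  stmt_9_general r s N a lam mu k x hmuA hlam0 hmu0 ha hN hdnu hdlam hdmu hdd1 hdd2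
end

section
/- Define the operator Δ_{i,N} = Σ_{j≠i} (xᵢ+xⱼ)/(xᵢ−xⱼ)(1 − s_{ij}) acting on Laurent polynomials in x₁,…,x_N, where s_{ij} transposes xᵢ and xⱼ. Then for every positive integer l, Δ_{i,N}(xᵢ^l) = N·xᵢ^l + 2xᵢ^{l−1}p₁ + 2xᵢ^{l−2}p₂ + ⋯ + 2xᵢ p_{l−1} + p_l − 2l·xᵢ^l, where p_r = x₁^r + ⋯ + x_N^r. -/
open MvPolynomial

/-!
For `a ≠ b` the summand is `(a + b) * (a ^ (l-1) + a ^ (l-2) b + ⋯ + b ^ (l-1))`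
`= a ^ l + b ^ l + 2 ∑_{0<m<l} a ^ (l-m) b ^ m`, a polynomial in `b`. Summing it over all `j`
(including `j = i`) produces the power sums; the spurious diagonal term, the same polynomial at
`b = a`, equals `2 l a ^ l`.
-/

/-- The embedding of polynomials into their fraction field. -/
noncomputable def toFrac (N : ℕ) :
    MvPolynomial (Fin N) ℝ →+* FractionRing (MvPolynomial (Fin N) ℝ) :=
  algebraMap _ _

open Finset

section CommRing

variable {R : Type*} [CommRing R]

theorem sum_Ico_pow_mul_pow_succ (a b : R) (n : ℕ) :
    ∑ m ∈ Ico 1 (n + 1), a ^ (n + 1 - m) * b ^ m =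
      a * b * ∑ k ∈ range n, a ^ k * b ^ (n - 1 - k) := by
  rw [sum_Ico_eq_sum_range, Nat.add_sub_cancel, geom_sum₂_comm, mul_sum]
  refine sum_congr rfl fun k hk => ?_
  rw [show n + 1 - (1 + k) = n - 1 - k + 1 by grind]
  ring

theorem sub_mul_add_pow_add_sum_Ico (a b : R) {l : ℕ} (hl : 0 < l) :
    (a - b) * (a ^ l + b ^ l + 2 * ∑ m ∈ Ico 1 l, a ^ (l - m) * b ^ m) =
      (a + b) * (a ^ l - b ^ l) := by
  obtain ⟨n, rfl⟩ := Nat.exists_eq_add_of_lt hl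
  rw [zero_add, sum_Ico_pow_mul_pow_succ]
  linear_combination 2 * a * b * geom_sum₂_mul a b n

theorem pow_add_pow_add_sum_Ico_self (a : R) {l : ℕ} (hl : 0 < l) :
    a ^ l + a ^ l + 2 * ∑ m ∈ Ico 1 l, a ^ (l - m) * a ^ m = 2 * l * a ^ l := by
  have hdiag : ∀ m ∈ Ico 1 l, a ^ (l - m) * a ^ m = a ^ l := fun m hm => by
    rw [← pow_add, Nat.sub_add_cancel (mem_Ico.1 hm).2.le]
  rw [sum_congr rfl hdiag, sum_const, Nat.card_Ico, nsmul_eq_mul, Nat.cast_sub hl]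
  ring

end CommRing

section Field

variable {K : Type*} [Field K]

theorem add_div_sub_mul_pow_sub_pow {a b : K} (hab : a ≠ b) {l : ℕ} (hl : 0 < l) :
    (a + b) / (a - b) * (a ^ l - b ^ l) =
      a ^ l + b ^ l + 2 * ∑ m ∈ Ico 1 l, a ^ (l - m) * b ^ m := by
  rw [div_mul_eq_mul_div, div_eq_iff (sub_ne_zero.2 hab), mul_comm _ (a - b),
    sub_mul_add_pow_add_sum_Ico a b hl]

theorem sum_erase_add_div_sub_mul_pow_sub_pow {ι : Type*} [Fintype ι] [DecidableEq ι]
    {x : ι → K} (hx : Function.Injective x) (i : ι) {l : ℕ} (hl : 0 < l) :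
    ∑ j ∈ univ.erase i, (x i + x j) / (x i - x j) * (x i ^ l - x j ^ l) =
      Fintype.card ι * x i ^ l + ∑ m ∈ Ico 1 l, 2 * x i ^ (l - m) * ∑ r, x r ^ m +
        ∑ r, x r ^ l - 2 * l * x i ^ l := by
  have hterm : ∀ j ∈ univ.erase i, (x i + x j) / (x i - x j) * (x i ^ l - x j ^ l) =
      x i ^ l + x j ^ l + 2 * ∑ m ∈ Ico 1 l, x i ^ (l - m) * x j ^ m := fun j hj =>
    add_div_sub_mul_pow_sub_pow (hx.ne (ne_of_mem_erase hj).symm) hl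
  rw [sum_congr rfl hterm, sum_erase_eq_sub (mem_univ i), pow_add_pow_add_sum_Ico_self _ hl]
  simp only [sum_add_distrib, sum_const, card_univ, nsmul_eq_mul, ← mul_sum]
  rw [sum_comm]
  simp only [← mul_sum, mul_assoc]
  ring

end Field

/-- For l > 0,
Δ_{i,N}(xᵢ^l) = Σ_{j≠i} (xᵢ+xⱼ)/(xᵢ−xⱼ)·(xᵢ^l − xⱼ^l)
             = N·xᵢ^l + 2xᵢ^{l−1}p₁ + ⋯ + 2xᵢp_{l−1} + p_l − 2l·xᵢ^l,
where p_r = x₁^r + ⋯ + x_N^r (stated in the fraction field). -/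
theorem stmt_13 (N l : ℕ) (hl : 0 < l) (i : Fin N) :
    (∑ j ∈ Finset.univ.erase i,
        ((toFrac N (X i) + toFrac N (X j)) / (toFrac N (X i) - toFrac N (X j))) *
          (toFrac N (X i) ^ l - toFrac N (X j) ^ l)) =
      (N : FractionRing (MvPolynomial (Fin N) ℝ)) * toFrac N (X i) ^ l +
        (∑ m ∈ Finset.Ico 1 l, 2 * toFrac N (X i) ^ (l - m) * toFrac N (∑ r, X r ^ m)) +
        toFrac N (∑ r, X r ^ l) - 2 * (l : FractionRing (MvPolynomial (Fin N) ℝ)) *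
          toFrac N (X i) ^ l := by
  have hinj : Function.Injective fun j => toFrac N (X j) :=
    (IsFractionRing.injective _ _).comp X_injective
  simpa only [map_sum, map_pow, Fintype.card_fin] using
    sum_erase_add_div_sub_mul_pow_sub_pow hinj i hl
end

section
/- Let k < 0 be real and χ a non-increasing integer sequence of length N; set e_N(χ) = Σᵢ χᵢ² − k Σᵢ (N−2i+1)χᵢ. If i ≠ j and both χ + εᵢ and χ + εⱼ are non-increasing (εᵢ is the i-th standard basis vector), then e_N(χ+εᵢ) − e_N(χ+εⱼ) = 2(χᵢ − χⱼ) + 2k(i−j), and this is nonzero whenever k is not a non-negative rational number. -/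
/-- The CMS eigenvalue e_N(χ) = Σᵢ χᵢ² − k Σᵢ (N−2i+1)χᵢ (1-based index i). -/
noncomputable def eCMS (N : ℕ) (k : ℝ) (chi : Fin N → ℤ) : ℝ :=
  ∑ i : Fin N, (chi i : ℝ) ^ 2 -
    k * ∑ i : Fin N, ((N : ℝ) - 2 * ((i : ℕ) + 1 : ℝ) + 1) * (chi i : ℝ)

/-- χ + εᵢ : add 1 to the i-th entry. -/
def addBox {N : ℕ} (chi : Fin N → ℤ) (i : Fin N) : Fin N → ℤ :=
  fun t => chi t + if t = i then 1 else 0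

/-- for a non-increasing integer sequence χ with χ+εᵢ and χ+εⱼ
non-increasing and i ≠ j,
e_N(χ+εᵢ) − e_N(χ+εⱼ) = 2(χᵢ−χⱼ) + 2k(i−j),
which is nonzero whenever k is not a non-negative rational number. -/
theorem stmt_18 (N : ℕ) (k : ℝ) (hk : k < 0) (chi : Fin N → ℤ)
    (hchi : ∀ s t : Fin N, s ≤ t → chi t ≤ chi s) (i j : Fin N) (hij : i ≠ j)
    (hi : ∀ s t : Fin N, s ≤ t → addBox chi i t ≤ addBox chi i s)
    (hj : ∀ s t : Fin N, s ≤ t → addBox chi j t ≤ addBox chi j s) :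
    eCMS N k (addBox chi i) - eCMS N k (addBox chi j) =
        2 * ((chi i : ℝ) - (chi j : ℝ)) + 2 * k * (((i : ℕ) : ℝ) - ((j : ℕ) : ℝ)) ∧
      ((∀ q : ℚ, 0 ≤ q → k ≠ (q : ℝ)) →
        eCMS N k (addBox chi i) - eCMS N k (addBox chi j) ≠ 0) := by

  have key : ∀ (c : Fin N → ℤ) (m : Fin N),
      eCMS N k (addBox c m) - eCMS N k c
        = 2 * (c m : ℝ) + 1 - k * ((N : ℝ) - 2 * ((m : ℕ) + 1 : ℝ) + 1) := by
    intro c m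
    unfold eCMS addBox
    have h1 : ∑ t : Fin N, ((c t + if t = m then 1 else 0 : ℤ) : ℝ) ^ 2
        = ∑ t : Fin N, ((c t : ℝ) ^ 2 + if t = m then 2 * (c t : ℝ) + 1 else 0) := by
      refine Finset.sum_congr rfl fun t _ => ?_
      by_cases h : t = m <;> simp [h] <;> ring
    have h2 : ∑ t : Fin N, ((N : ℝ) - 2 * ((t : ℕ) + 1 : ℝ) + 1) *
          ((c t + if t = m then 1 else 0 : ℤ) : ℝ)
        = ∑ t : Fin N, (((N : ℝ) - 2 * ((t : ℕ) + 1 : ℝ) + 1) * (c t : ℝ) +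
            if t = m then (N : ℝ) - 2 * ((t : ℕ) + 1 : ℝ) + 1 else 0) := by
      refine Finset.sum_congr rfl fun t _ => ?_
      by_cases h : t = m <;> simp [h] <;> ring
    rw [h1, h2, Finset.sum_add_distrib, Finset.sum_add_distrib,
      Finset.sum_ite_eq' Finset.univ m, Finset.sum_ite_eq' Finset.univ m]
    simp
    ring
  have hmain : eCMS N k (addBox chi i) - eCMS N k (addBox chi j) =
      2 * ((chi i : ℝ) - (chi j : ℝ)) + 2 * k * (((i : ℕ) : ℝ) - ((j : ℕ) : ℝ)) := by
    have h1 := key chi i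
    have h2 := key chi j
    have : eCMS N k (addBox chi i) - eCMS N k (addBox chi j)
        = (eCMS N k (addBox chi i) - eCMS N k chi) -
          (eCMS N k (addBox chi j) - eCMS N k chi) := by ring
    rw [this, h1, h2]; ring
  refine ⟨hmain, fun _ hzero => ?_⟩
  rw [hmain] at hzero
  rcases lt_or_gt_of_ne hij with h | h
  · -- i < j, χⱼ+1 ≤ χᵢ from hj
    have hle := hj i j h.le
    simp [addBox, hij] at hle
    have hle' : (chi j : ℝ) + 1 ≤ (chi i : ℝ) := by exact_mod_cast hle
    have hlt : ((i : ℕ) : ℝ) < ((j : ℕ) : ℝ) := by exact_mod_cast h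
    nlinarith
  · have hle := hi j i h.le
    simp [addBox, hij.symm] at hle
    have hle' : (chi i : ℝ) + 1 ≤ (chi j : ℝ) := by exact_mod_cast hle
    have hlt : ((j : ℕ) : ℝ) < ((i : ℕ) : ℝ) := by exact_mod_cast h
    nlinarith
end

section
/- Let Λ^± be the free commutative algebra over C(p₀) on generators p_i, i ∈ Z∖{0}, and for each N let φ_N : Λ^± → C[x₁^{±1},…,x_N^{±1}]^{S_N} be the homomorphism with φ_N(p_i) = x₁^i + ⋯ + x_N^i and p₀ ↦ N. If g ∈ Λ^± has coefficients polynomial in p₀ and φ_N(g) = 0 for all positive integers N, then g = 0. -/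
/-!
Let `∏ p_i ^ m i` be a monomial of `g` of maximal degree `d`, with multiset of indices `t`, and let
`N ≥ d`. Placing the entries of `t` on `d` distinct coordinates gives a Laurent monomial `x ^ v`.
In a product of at most `d` power sums, `x ^ v` can only arise when the indices of the
product are exactly `t`, since each power sum puts its exponent on a single coordinate; moreover
the coefficients of such products are nonnegative counts. Hence the coefficient of `x ^ v` in
`φ_N g` is a positive integer times the value at `N` of the `p₀`-polynomial coefficient of the
monomial, which therefore vanishes at all large integers and is zero.
-/

/-- The i-th power sum x₁^i + ⋯ + x_N^i as a Laurent polynomial in N variables. -/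
noncomputable def powerSum (N : ℕ) (i : ℤ) : AddMonoidAlgebra ℝ (Fin N → ℤ) :=
  ∑ r : Fin N, AddMonoidAlgebra.single (Pi.single r i) 1

/-- The homomorphism φ_N : Λ^± → C[x₁^{±1},…,x_N^{±1}] sending the free generator p_i
(i ≠ 0) to the i-th power sum and evaluating p₀ at N. Here Λ^± is modelled as the
polynomial algebra in the p_i, i ∈ ℤ∖{0}, with coefficients polynomial in p₀. -/
noncomputable def phiLaurent (N : ℕ) :
    MvPolynomial {i : ℤ // i ≠ 0} (Polynomial ℝ) → AddMonoidAlgebra ℝ (Fin N → ℤ) :=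
  MvPolynomial.eval₂
    ((AddMonoidAlgebra.singleZeroRingHom).comp (Polynomial.evalRingHom (N : ℝ)))
    (fun i => powerSum N i.1)

open Finset

theorem Finsupp.prod_toMultiset_map {α M : Type*} [CommMonoid M] (m : α →₀ ℕ) (g : α → M) :
    (m.toMultiset.map g).prod = m.prod fun a k => g a ^ k := by
  rw [Finsupp.toMultiset_map, Finsupp.prod_toMultiset,
    Finsupp.prod_mapDomain_index (fun _ => pow_zero _) fun _ _ _ => pow_add _ _ _]

theorem Polynomial.eq_zero_of_eval_natCast_eq_zero {R : Type*} [CommRing R] [IsDomain R]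
    [CharZero R] (p : Polynomial R) (n₀ : ℕ) (h : ∀ N : ℕ, n₀ ≤ N → p.eval (N : R) = 0) :
    p = 0 := by
  refine p.eq_zero_of_infinite_isRoot <| Set.infinite_of_injective_forall_mem
    (f := fun k : ℕ => ((n₀ + k : ℕ) : R)) (fun a b hab => ?_) fun k => h _ (by omega)
  simpa using hab

section FiberSum

variable {ι ι' κ M : Type*} [Fintype ι] [Fintype ι'] [DecidableEq κ] [AddCommMonoid M]

/-- The exponent vector of the monomial `∏ j, x (f j) ^ l j`. -/
def fiberSum (f : ι → κ) (l : ι → M) : κ → M := ∑ j, Pi.single (f j) (l j)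

theorem fiberSum_apply (f : ι → κ) (l : ι → M) (r : κ) :
    fiberSum f l r = ∑ j with f j = r, l j := by
  simp [fiberSum, Finset.sum_apply, Pi.single_apply, Finset.sum_filter, eq_comm]

theorem fiberSum_apply_of_injective {f : ι → κ} (hf : f.Injective) (l : ι → M) (j : ι) :
    fiberSum f l (f j) = l j := by
  rw [fiberSum_apply, sum_filter, sum_eq_single j (fun j' _ hne => if_neg (hf.ne hne)) (by simp),
    if_pos rfl]

variable [Fintype κ] [DecidableEq M]

theorem filter_fiberSum_ne_zero_subset (f : ι → κ) (l : ι → M) :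
    univ.filter (fiberSum f l · ≠ 0) ⊆ univ.image f := by
  intro r hr
  obtain ⟨j, hj, -⟩ := exists_ne_zero_of_sum_ne_zero (by simpa [fiberSum_apply] using hr)
  exact mem_image.2 ⟨j, mem_univ j, (mem_filter.1 hj).2⟩

theorem filter_fiberSum_ne_zero_eq_image {f : ι → κ} (hf : f.Injective) {l : ι → M}
    (hl : ∀ j, l j ≠ 0) : univ.filter (fiberSum f l · ≠ 0) = univ.image f := by
  refine (filter_fiberSum_ne_zero_subset f l).antisymm fun r hr => ?_
  obtain ⟨j, -, rfl⟩ := mem_image.1 hr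
  simpa [fiberSum_apply_of_injective hf] using hl j

theorem filter_fiberSum_ne_zero_eq_image_of_card_le {f : ι → κ} {l : ι → M}
    (h : Fintype.card ι ≤ #(univ.filter (fiberSum f l · ≠ 0))) :
    univ.filter (fiberSum f l · ≠ 0) = univ.image f ∧ f.Injective := by
  have hsub := filter_fiberSum_ne_zero_subset f l
  have himage : #(univ.image f) ≤ Fintype.card ι := card_image_le
  have heq := eq_of_subset_of_card_le hsub (himage.trans h)
  exact ⟨heq, by simpa using card_image_iff.1 (le_antisymm himage (heq ▸ h))⟩

theorem map_fiberSum_filter_ne_zero {f : ι → κ} (hf : f.Injective) (l : ι → M)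
    (hS : univ.filter (fiberSum f l · ≠ 0) = univ.image f) :
    (univ.filter (fiberSum f l · ≠ 0)).val.map (fiberSum f l) = univ.val.map l := by
  rw [hS, image_val_of_injOn hf.injOn, Multiset.map_map]
  exact Multiset.map_congr rfl fun j _ => fiberSum_apply_of_injective hf l j

theorem map_univ_eq_of_fiberSum_eq {f : ι → κ} {l : ι → M} {f' : ι' → κ} {l' : ι' → M}
    (hf' : f'.Injective) (hl' : ∀ j, l' j ≠ 0) (hcard : Fintype.card ι ≤ Fintype.card ι')
    (h : fiberSum f l = fiberSum f' l') : univ.val.map l = univ.val.map l' := by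
  have hS' := filter_fiberSum_ne_zero_eq_image hf' hl'
  obtain ⟨hS, hf⟩ := filter_fiberSum_ne_zero_eq_image_of_card_le (f := f) (l := l) <| by
    rwa [h, hS', card_image_of_injective _ hf', card_univ]
  rw [← map_fiberSum_filter_ne_zero hf l hS, ← map_fiberSum_filter_ne_zero hf' l' hS', h]

end FiberSum

theorem prod_powerSum (N : ℕ) {ι : Type*} [Fintype ι] [DecidableEq ι] (l : ι → ℤ) :
    ∏ j, powerSum N (l j) = ∑ f : ι → Fin N, AddMonoidAlgebra.single (fiberSum f l) 1 := by
  simp only [powerSum, prod_univ_sum, Fintype.piFinset_univ, AddMonoidAlgebra.prod_single,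
    prod_const_one, fiberSum]

theorem coeff_prod_powerSum_ne_zero_iff (N : ℕ) {ι : Type*} [Fintype ι] [DecidableEq ι]
    (l : ι → ℤ) (v : Fin N → ℤ) :
    (∏ j, powerSum N (l j)).coeff v ≠ 0 ↔ ∃ f : ι → Fin N, fiberSum f l = v := by
  simp only [prod_powerSum, AddMonoidAlgebra.coeff_sum, AddMonoidAlgebra.coeff_single,
    Finsupp.finsetSum_apply, Finsupp.single_apply, sum_boole, ne_eq, Nat.cast_eq_zero,
    card_eq_zero, filter_eq_empty_iff, mem_univ, true_implies, not_forall, not_not]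

theorem prod_map_powerSum_eq_prod_coe (N : ℕ) (s : Multiset ℤ) :
    (s.map (powerSum N)).prod = ∏ x : s, powerSum N x := by
  rw [prod_eq_multiset_prod, Multiset.map_univ]

theorem coeff_prod_map_powerSum_ne_zero_iff {N : ℕ} {s t : Multiset ℤ}
    (hst : Multiset.card s ≤ Multiset.card t) (ht : (0 : ℤ) ∉ t) {e : t → Fin N}
    (he : e.Injective) :
    ((s.map (powerSum N)).prod).coeff (fiberSum e (↑)) ≠ 0 ↔ s = t := by
  classical
  rw [prod_map_powerSum_eq_prod_coe, coeff_prod_powerSum_ne_zero_iff]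
  constructor
  · rintro ⟨f, hf⟩
    simpa using map_univ_eq_of_fiberSum_eq he (fun x hx => ht (hx ▸ Multiset.coe_mem)) (by simpa) hf
  · rintro rfl
    exact ⟨e, rfl⟩

/-- The multiset of indices of the monomial `∏ i, p_i ^ m i`. -/
noncomputable def indices (m : {i : ℤ // i ≠ 0} →₀ ℕ) : Multiset ℤ := m.toMultiset.map (↑)

theorem indices_injective : Function.Injective indices :=
  (Multiset.map_injective Subtype.val_injective).comp
    (Function.LeftInverse.injective Finsupp.toMultiset_toFinsupp)

theorem zero_notMem_indices (m : {i : ℤ // i ≠ 0} →₀ ℕ) : (0 : ℤ) ∉ indices m := by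
  simp [indices]

theorem coeff_phiLaurent (N : ℕ) (g : MvPolynomial {i : ℤ // i ≠ 0} (Polynomial ℝ))
    (v : Fin N → ℤ) :
    (phiLaurent N g).coeff v =
      ∑ m ∈ g.support,
        (g.coeff m).eval (N : ℝ) * (((indices m).map (powerSum N)).prod).coeff v := by
  simp only [phiLaurent, MvPolynomial.eval₂_eq, AddMonoidAlgebra.coeff_sum,
    Finsupp.finsetSum_apply]
  refine sum_congr rfl fun m _ => ?_
  rw [indices, Multiset.map_map, Finsupp.prod_toMultiset_map]
  exact AddMonoidAlgebra.coeff_single_zero_mul _ _ _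

theorem eval_coeff_eq_zero_of_phiLaurent_eq_zero {N : ℕ}
    {g : MvPolynomial {i : ℤ // i ≠ 0} (Polynomial ℝ)} (hg : phiLaurent N g = 0)
    {m : {i : ℤ // i ≠ 0} →₀ ℕ} (hm : m ∈ g.support)
    (hmax : ∀ m' ∈ g.support, Multiset.card (indices m') ≤ Multiset.card (indices m))
    (hN : Multiset.card (indices m) ≤ N) :
    (g.coeff m).eval (N : ℝ) = 0 := by
  obtain ⟨e⟩ : Nonempty (indices m ↪ Fin N) := Function.Embedding.nonempty_of_card_le (by simpa)
  have hcoeff := coeff_phiLaurent N g (fiberSum e (↑))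
  rw [hg, sum_eq_single_of_mem m hm fun m' hm' hne => ?_] at hcoeff
  · exact (mul_eq_zero.1 hcoeff.symm).resolve_right
      ((coeff_prod_map_powerSum_ne_zero_iff le_rfl (zero_notMem_indices m) e.injective).2 rfl)
  · have hzero := mt (coeff_prod_map_powerSum_ne_zero_iff (hmax m' hm') (zero_notMem_indices m)
      e.injective).1 (indices_injective.ne hne)
    rw [not_ne_iff.1 hzero, mul_zero]

/-- if g ∈ Λ^± (with coefficients polynomial in p₀) satisfies
φ_N(g) = 0 for all positive integers N, then g = 0. -/
theorem stmt_19 (g : MvPolynomial {i : ℤ // i ≠ 0} (Polynomial ℝ))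
    (h : ∀ N : ℕ, 0 < N → phiLaurent N g = 0) : g = 0 := by
  by_contra hg
  obtain ⟨m, hm, hmax⟩ := g.support.exists_max_image (fun m => Multiset.card (indices m))
    (MvPolynomial.support_nonempty.2 hg)
  refine MvPolynomial.mem_support_iff.1 hm <| (g.coeff m).eq_zero_of_eval_natCast_eq_zero
    (Multiset.card (indices m) + 1) fun N hN => ?_
  exact eval_coeff_eq_zero_of_phiLaurent_eq_zero (h N (by omega)) hm hmax (by omega)
end
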